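/- Reachability (synthetic clause): If Γ ⊢ ê◇ ⇒ τ and ê◇ = ê'◇, then there exists a list of actions ᾱ such that ᾱ movements (every action in ᾱ is a movement action) and the iterated synthetic action judgement Γ ⊢ ê ⇒ τ --ᾱ--> ê' ⇒ τ holds. -/
import Mathlib


/-! Hazelnut: H-types, H-expressions, bidirectional statics,
    Z-types, Z-expressions, and the bidirectional action semantics. -/

inductive HTyp : Type
  | num : HTyp
  | arr : HTyp → HTyp → HTyp
  | hole : HTyp
  deriving DecidableEq

inductive HExp : Type
  | var : String → HExp
  | lam : String → HExp → HExp
  | ap : HExp → HExp → HExp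
  | lit : Nat → HExp
  | plus : HExp → HExp → HExp
  | asc : HExp → HTyp → HExp
  | hole : HExp
  | nehole : HExp → HExp
  deriving DecidableEq

/-- Typing contexts map variables to hypothesized H-types. -/
def Ctx : Type := String → Option HTyp

/-- Context extension Γ, x : τ. -/
def Ctx.extend (Γ : Ctx) (x : String) (τ : HTyp) : Ctx :=
  fun y => if y = x then some τ else Γ y

/-- Type consistency τ ~ τ'. -/
inductive Consistent : HTyp → HTyp → Prop
  | holeR (τ : HTyp) : Consistent τ .hole
  | holeL (τ : HTyp) : Consistent .hole τ
  | refl (τ : HTyp) : Consistent τ τ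
  | arr {τ₁ τ₂ τ₁' τ₂' : HTyp} :
      Consistent τ₁ τ₁' → Consistent τ₂ τ₂' →
      Consistent (.arr τ₁ τ₂) (.arr τ₁' τ₂')

/-- Type inconsistency τ ≁ τ'. -/
inductive Inconsistent : HTyp → HTyp → Prop
  | numArr (τ₁ τ₂ : HTyp) : Inconsistent .num (.arr τ₁ τ₂)
  | arrNum (τ₁ τ₂ : HTyp) : Inconsistent (.arr τ₁ τ₂) .num
  | arr1 {τ₁ τ₂ τ₃ τ₄ : HTyp} :
      Inconsistent τ₁ τ₃ → Inconsistent (.arr τ₁ τ₂) (.arr τ₃ τ₄)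
  | arr2 {τ₁ τ₂ τ₃ τ₄ : HTyp} :
      Inconsistent τ₂ τ₄ → Inconsistent (.arr τ₁ τ₂) (.arr τ₃ τ₄)

/-- Matched arrow type: τ ▸ τ₁ → τ₂. -/
inductive MArr : HTyp → HTyp → HTyp → Prop
  | hole : MArr .hole .hole .hole
  | arr (τ₁ τ₂ : HTyp) : MArr (.arr τ₁ τ₂) τ₁ τ₂

mutual
  /-- Type synthesis: Γ ⊢ e ⇒ τ. -/
  inductive Syn : Ctx → HExp → HTyp → Prop
    | var {Γ : Ctx} {x : String} {τ : HTyp} :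
        Γ x = some τ → Syn Γ (.var x) τ
    | asc {Γ : Ctx} {e : HExp} {τ : HTyp} :
        Ana Γ e τ → Syn Γ (.asc e τ) τ
    | ap {Γ : Ctx} {e₁ e₂ : HExp} {τ₁ τ₂ τ : HTyp} :
        Syn Γ e₁ τ₁ → MArr τ₁ τ₂ τ → Ana Γ e₂ τ₂ → Syn Γ (.ap e₁ e₂) τ
    | lit {Γ : Ctx} (n : Nat) : Syn Γ (.lit n) .num
    | plus {Γ : Ctx} {e₁ e₂ : HExp} :
        Ana Γ e₁ .num → Ana Γ e₂ .num → Syn Γ (.plus e₁ e₂) .num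
    | hole {Γ : Ctx} : Syn Γ .hole .hole
    | nehole {Γ : Ctx} {e : HExp} {τ : HTyp} :
        Syn Γ e τ → Syn Γ (.nehole e) .hole

  /-- Type analysis: Γ ⊢ e ⇐ τ. -/
  inductive Ana : Ctx → HExp → HTyp → Prop
    | lam {Γ : Ctx} {x : String} {e : HExp} {τ τ₁ τ₂ : HTyp} :
        MArr τ τ₁ τ₂ → Ana (Γ.extend x τ₁) e τ₂ → Ana Γ (.lam x e) τ
    | subsume {Γ : Ctx} {e : HExp} {τ τ' : HTyp} :
        Syn Γ e τ' → Consistent τ τ' → Ana Γ e τ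
end

/-- Z-types: H-types with a cursor. -/
inductive ZTyp : Type
  | cursor : HTyp → ZTyp
  | arrL : ZTyp → HTyp → ZTyp
  | arrR : HTyp → ZTyp → ZTyp
  deriving DecidableEq

/-- Z-expressions: H-expressions with a cursor. -/
inductive ZExp : Type
  | cursor : HExp → ZExp
  | lam : String → ZExp → ZExp
  | apL : ZExp → HExp → ZExp
  | apR : HExp → ZExp → ZExp
  | plusL : ZExp → HExp → ZExp
  | plusR : HExp → ZExp → ZExp
  | ascL : ZExp → HTyp → ZExp
  | ascR : HExp → ZTyp → ZExp
  | nehole : ZExp → ZExp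
  deriving DecidableEq

/-- Cursor erasure for Z-types: τ̂◇. -/
def ZTyp.erase : ZTyp → HTyp
  | .cursor τ => τ
  | .arrL zt τ => .arr zt.erase τ
  | .arrR τ zt => .arr τ zt.erase

/-- Cursor erasure for Z-expressions: ê◇. -/
def ZExp.erase : ZExp → HExp
  | .cursor e => e
  | .lam x ze => .lam x ze.erase
  | .apL ze e => .ap ze.erase e
  | .apR e ze => .ap e ze.erase
  | .plusL ze e => .plus ze.erase e
  | .plusR e ze => .plus e ze.erase
  | .ascL ze τ => .asc ze.erase τ
  | .ascR e zt => .asc e zt.erase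
  | .nehole ze => .nehole ze.erase

inductive Dir : Type
  | child : Nat → Dir
  | parent : Dir
  deriving DecidableEq

inductive Shape : Type
  | arrow : Shape
  | num : Shape
  | asc : Shape
  | var : String → Shape
  | lam : String → Shape
  | ap : Shape
  | lit : Nat → Shape
  | plus : Shape
  | nehole : Shape
  deriving DecidableEq

inductive HAction : Type
  | move : Dir → HAction
  | construct : Shape → HAction
  | del : HAction
  | finish : HAction
  deriving DecidableEq

/-- Type actions: τ̂ --α--> τ̂'. -/
inductive TAct : ZTyp → HAction → ZTyp → Prop
  | arrChild1 {τ₁ τ₂ : HTyp} :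
      TAct (.cursor (.arr τ₁ τ₂)) (.move (.child 1)) (.arrL (.cursor τ₁) τ₂)
  | arrChild2 {τ₁ τ₂ : HTyp} :
      TAct (.cursor (.arr τ₁ τ₂)) (.move (.child 2)) (.arrR τ₁ (.cursor τ₂))
  | arrParent1 {τ₁ τ₂ : HTyp} :
      TAct (.arrL (.cursor τ₁) τ₂) (.move .parent) (.cursor (.arr τ₁ τ₂))
  | arrParent2 {τ₁ τ₂ : HTyp} :
      TAct (.arrR τ₁ (.cursor τ₂)) (.move .parent) (.cursor (.arr τ₁ τ₂))
  | del {τ : HTyp} : TAct (.cursor τ) .del (.cursor .hole)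
  | conArrow {τ : HTyp} :
      TAct (.cursor τ) (.construct .arrow) (.arrR τ (.cursor .hole))
  | conNum : TAct (.cursor .hole) (.construct .num) (.cursor .num)
  | zip1 {zt zt' : ZTyp} {α : HAction} {τ : HTyp} :
      TAct zt α zt' → TAct (.arrL zt τ) α (.arrL zt' τ)
  | zip2 {zt zt' : ZTyp} {α : HAction} {τ : HTyp} :
      TAct zt α zt' → TAct (.arrR τ zt) α (.arrR τ zt')

/-- Expression movement: ê --move δ--> ê'. -/
inductive EMove : ZExp → Dir → ZExp → Prop
  | ascChild1 {e : HExp} {τ : HTyp} :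
      EMove (.cursor (.asc e τ)) (.child 1) (.ascL (.cursor e) τ)
  | ascChild2 {e : HExp} {τ : HTyp} :
      EMove (.cursor (.asc e τ)) (.child 2) (.ascR e (.cursor τ))
  | ascParent1 {e : HExp} {τ : HTyp} :
      EMove (.ascL (.cursor e) τ) .parent (.cursor (.asc e τ))
  | ascParent2 {e : HExp} {τ : HTyp} :
      EMove (.ascR e (.cursor τ)) .parent (.cursor (.asc e τ))
  | lamChild1 {x : String} {e : HExp} :
      EMove (.cursor (.lam x e)) (.child 1) (.lam x (.cursor e))
  | lamParent {x : String} {e : HExp} :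
      EMove (.lam x (.cursor e)) .parent (.cursor (.lam x e))
  | plusChild1 {e₁ e₂ : HExp} :
      EMove (.cursor (.plus e₁ e₂)) (.child 1) (.plusL (.cursor e₁) e₂)
  | plusChild2 {e₁ e₂ : HExp} :
      EMove (.cursor (.plus e₁ e₂)) (.child 2) (.plusR e₁ (.cursor e₂))
  | plusParent1 {e₁ e₂ : HExp} :
      EMove (.plusL (.cursor e₁) e₂) .parent (.cursor (.plus e₁ e₂))
  | plusParent2 {e₁ e₂ : HExp} :
      EMove (.plusR e₁ (.cursor e₂)) .parent (.cursor (.plus e₁ e₂))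
  | apChild1 {e₁ e₂ : HExp} :
      EMove (.cursor (.ap e₁ e₂)) (.child 1) (.apL (.cursor e₁) e₂)
  | apChild2 {e₁ e₂ : HExp} :
      EMove (.cursor (.ap e₁ e₂)) (.child 2) (.apR e₁ (.cursor e₂))
  | apParent1 {e₁ e₂ : HExp} :
      EMove (.apL (.cursor e₁) e₂) .parent (.cursor (.ap e₁ e₂))
  | apParent2 {e₁ e₂ : HExp} :
      EMove (.apR e₁ (.cursor e₂)) .parent (.cursor (.ap e₁ e₂))
  | neholeChild1 {e : HExp} :
      EMove (.cursor (.nehole e)) (.child 1) (.nehole (.cursor e))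
  | neholeParent {e : HExp} :
      EMove (.nehole (.cursor e)) .parent (.cursor (.nehole e))
  | ascZip1 {ze ze' : ZExp} {δ : Dir} {τ : HTyp} :
      EMove ze δ ze' → EMove (.ascL ze τ) δ (.ascL ze' τ)
  | ascZip2 {zt zt' : ZTyp} {δ : Dir} {e : HExp} :
      TAct zt (.move δ) zt' → EMove (.ascR e zt) δ (.ascR e zt')
  | lamZip {x : String} {ze ze' : ZExp} {δ : Dir} :
      EMove ze δ ze' → EMove (.lam x ze) δ (.lam x ze')
  | apZip1 {ze ze' : ZExp} {δ : Dir} {e : HExp} :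
      EMove ze δ ze' → EMove (.apL ze e) δ (.apL ze' e)
  | apZip2 {ze ze' : ZExp} {δ : Dir} {e : HExp} :
      EMove ze δ ze' → EMove (.apR e ze) δ (.apR e ze')
  | plusZip1 {ze ze' : ZExp} {δ : Dir} {e : HExp} :
      EMove ze δ ze' → EMove (.plusL ze e) δ (.plusL ze' e)
  | plusZip2 {ze ze' : ZExp} {δ : Dir} {e : HExp} :
      EMove ze δ ze' → EMove (.plusR e ze) δ (.plusR e ze')
  | neholeZip {ze ze' : ZExp} {δ : Dir} :
      EMove ze δ ze' → EMove (.nehole ze) δ (.nehole ze')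

mutual
  /-- Synthetic action judgement: Γ ⊢ ê ⇒ τ --α--> ê' ⇒ τ'. -/
  inductive SynAct : Ctx → ZExp → HTyp → HAction → ZExp → HTyp → Prop
    | move {Γ : Ctx} {ze ze' : ZExp} {τ : HTyp} {δ : Dir} :
        EMove ze δ ze' → SynAct Γ ze τ (.move δ) ze' τ
    | del {Γ : Ctx} {e : HExp} {τ : HTyp} :
        SynAct Γ (.cursor e) τ .del (.cursor .hole) .hole
    | conAsc {Γ : Ctx} {e : HExp} {τ : HTyp} :
        SynAct Γ (.cursor e) τ (.construct .asc) (.ascR e (.cursor τ)) τ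
    | conVar {Γ : Ctx} {x : String} {τ : HTyp} :
        Γ x = some τ →
        SynAct Γ (.cursor .hole) .hole (.construct (.var x)) (.cursor (.var x)) τ
    | conLam {Γ : Ctx} {x : String} :
        SynAct Γ (.cursor .hole) .hole (.construct (.lam x))
          (.ascR (.lam x .hole) (.arrL (.cursor .hole) .hole)) (.arr .hole .hole)
    | conApArr {Γ : Ctx} {e : HExp} {τ τ₁ τ₂ : HTyp} :
        MArr τ τ₁ τ₂ →
        SynAct Γ (.cursor e) τ (.construct .ap) (.apR e (.cursor .hole)) τ₂
    | conApOtw {Γ : Ctx} {e : HExp} {τ : HTyp} :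
        Inconsistent τ (.arr .hole .hole) →
        SynAct Γ (.cursor e) τ (.construct .ap)
          (.apR (.nehole e) (.cursor .hole)) .hole
    | conLit {Γ : Ctx} {n : Nat} :
        SynAct Γ (.cursor .hole) .hole (.construct (.lit n)) (.cursor (.lit n)) .num
    | conPlus1 {Γ : Ctx} {e : HExp} {τ : HTyp} :
        Consistent τ .num →
        SynAct Γ (.cursor e) τ (.construct .plus) (.plusR e (.cursor .hole)) .num
    | conPlus2 {Γ : Ctx} {e : HExp} {τ : HTyp} :
        Inconsistent τ .num →
        SynAct Γ (.cursor e) τ (.construct .plus)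
          (.plusR (.nehole e) (.cursor .hole)) .num
    | conNEHole {Γ : Ctx} {e : HExp} {τ : HTyp} :
        SynAct Γ (.cursor e) τ (.construct .nehole) (.nehole (.cursor e)) .hole
    | finish {Γ : Ctx} {e : HExp} {τ' : HTyp} :
        Syn Γ e τ' →
        SynAct Γ (.cursor (.nehole e)) .hole .finish (.cursor e) τ'
    | zipAsc1 {Γ : Ctx} {ze ze' : ZExp} {τ : HTyp} {α : HAction} :
        AnaAct Γ ze τ α ze' →
        SynAct Γ (.ascL ze τ) τ α (.ascL ze' τ) τ
    | zipAsc2 {Γ : Ctx} {e : HExp} {zt zt' : ZTyp} {α : HAction} :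
        TAct zt α zt' → Ana Γ e zt'.erase →
        SynAct Γ (.ascR e zt) zt.erase α (.ascR e zt') zt'.erase
    | zipApArr {Γ : Ctx} {ze ze' : ZExp} {e : HExp} {τ₁ τ₂ τ₃ τ₄ τ₅ : HTyp} {α : HAction} :
        Syn Γ ze.erase τ₂ → SynAct Γ ze τ₂ α ze' τ₃ →
        MArr τ₃ τ₄ τ₅ → Ana Γ e τ₄ →
        SynAct Γ (.apL ze e) τ₁ α (.apL ze' e) τ₅
    | zipApAna {Γ : Ctx} {ze ze' : ZExp} {e : HExp} {τ₁ τ₂ τ₃ τ₄ : HTyp} {α : HAction} :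
        Syn Γ e τ₂ → MArr τ₂ τ₃ τ₄ → AnaAct Γ ze τ₃ α ze' →
        SynAct Γ (.apR e ze) τ₁ α (.apR e ze') τ₄
    | zipPlus1 {Γ : Ctx} {ze ze' : ZExp} {e : HExp} {α : HAction} :
        AnaAct Γ ze .num α ze' →
        SynAct Γ (.plusL ze e) .num α (.plusL ze' e) .num
    | zipPlus2 {Γ : Ctx} {ze ze' : ZExp} {e : HExp} {α : HAction} :
        AnaAct Γ ze .num α ze' →
        SynAct Γ (.plusR e ze) .num α (.plusR e ze') .num
    | zipHole {Γ : Ctx} {ze ze' : ZExp} {τ τ' : HTyp} {α : HAction} :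
        Syn Γ ze.erase τ → SynAct Γ ze τ α ze' τ' →
        SynAct Γ (.nehole ze) .hole α (.nehole ze') .hole

  /-- Analytic action judgement: Γ ⊢ ê --α--> ê' ⇐ τ. -/
  inductive AnaAct : Ctx → ZExp → HTyp → HAction → ZExp → Prop
    | subsume {Γ : Ctx} {ze ze' : ZExp} {τ τ' τ'' : HTyp} {α : HAction} :
        Syn Γ ze.erase τ' → SynAct Γ ze τ' α ze' τ'' → Consistent τ τ'' →
        AnaAct Γ ze τ α ze'
    | move {Γ : Ctx} {ze ze' : ZExp} {τ : HTyp} {δ : Dir} :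
        EMove ze δ ze' → AnaAct Γ ze τ (.move δ) ze'
    | del {Γ : Ctx} {e : HExp} {τ : HTyp} :
        AnaAct Γ (.cursor e) τ .del (.cursor .hole)
    | conAsc {Γ : Ctx} {e : HExp} {τ : HTyp} :
        AnaAct Γ (.cursor e) τ (.construct .asc) (.ascR e (.cursor τ))
    | conVar {Γ : Ctx} {x : String} {τ τ' : HTyp} :
        Γ x = some τ' → Inconsistent τ τ' →
        AnaAct Γ (.cursor .hole) τ (.construct (.var x)) (.nehole (.cursor (.var x)))
    | conLam1 {Γ : Ctx} {x : String} {τ τ₁ τ₂ : HTyp} :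
        MArr τ τ₁ τ₂ →
        AnaAct Γ (.cursor .hole) τ (.construct (.lam x)) (.lam x (.cursor .hole))
    | conLam2 {Γ : Ctx} {x : String} {τ : HTyp} :
        Inconsistent τ (.arr .hole .hole) →
        AnaAct Γ (.cursor .hole) τ (.construct (.lam x))
          (.nehole (.ascR (.lam x .hole) (.arrL (.cursor .hole) .hole)))
    | conLit {Γ : Ctx} {n : Nat} {τ : HTyp} :
        Inconsistent τ .num →
        AnaAct Γ (.cursor .hole) τ (.construct (.lit n)) (.nehole (.cursor (.lit n)))
    | finish {Γ : Ctx} {e : HExp} {τ : HTyp} :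
        Ana Γ e τ →
        AnaAct Γ (.cursor (.nehole e)) τ .finish (.cursor e)
    | zipLam {Γ : Ctx} {x : String} {ze ze' : ZExp} {τ τ₁ τ₂ : HTyp} {α : HAction} :
        MArr τ τ₁ τ₂ → AnaAct (Γ.extend x τ₁) ze τ₂ α ze' →
        AnaAct Γ (.lam x ze) τ α (.lam x ze')
end

/-- Iterated type action judgement. -/
inductive TActI : ZTyp → List HAction → ZTyp → Prop
  | refl {zt : ZTyp} : TActI zt [] zt
  | cons {zt zt' zt'' : ZTyp} {α : HAction} {αs : List HAction} :
      TAct zt α zt' → TActI zt' αs zt'' → TActI zt (α :: αs) zt''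

/-- Iterated synthetic action judgement. -/
inductive SynActI : Ctx → ZExp → HTyp → List HAction → ZExp → HTyp → Prop
  | refl {Γ : Ctx} {ze : ZExp} {τ : HTyp} : SynActI Γ ze τ [] ze τ
  | cons {Γ : Ctx} {ze ze' ze'' : ZExp} {τ τ' τ'' : HTyp} {α : HAction} {αs : List HAction} :
      SynAct Γ ze τ α ze' τ' → SynActI Γ ze' τ' αs ze'' τ'' →
      SynActI Γ ze τ (α :: αs) ze'' τ''

/-- Iterated analytic action judgement. -/
inductive AnaActI : Ctx → ZExp → HTyp → List HAction → ZExp → Prop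
  | refl {Γ : Ctx} {ze : ZExp} {τ : HTyp} : AnaActI Γ ze τ [] ze
  | cons {Γ : Ctx} {ze ze' ze'' : ZExp} {τ : HTyp} {α : HAction} {αs : List HAction} :
      AnaAct Γ ze τ α ze' → AnaActI Γ ze' τ αs ze'' →
      AnaActI Γ ze τ (α :: αs) ze''

/-- Every action in the list is a movement action. -/
inductive Movements : List HAction → Prop
  | nil : Movements []
  | cons {δ : Dir} {αs : List HAction} :
      Movements αs → Movements (.move δ :: αs)

/-- Iterated type movements. -/
inductive TMoveI : ZTyp → List Dir → ZTyp → Prop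
  | refl {zt : ZTyp} : TMoveI zt [] zt
  | cons {zt zt' zt'' : ZTyp} {δ : Dir} {δs : List Dir} :
      TAct zt (.move δ) zt' → TMoveI zt' δs zt'' → TMoveI zt (δ :: δs) zt''

/-- Iterated expression movements. -/
inductive EMoveI : ZExp → List Dir → ZExp → Prop
  | refl {ze : ZExp} : EMoveI ze [] ze
  | cons {ze ze' ze'' : ZExp} {δ : Dir} {δs : List Dir} :
      EMove ze δ ze' → EMoveI ze' δs ze'' → EMoveI ze (δ :: δs) ze''

theorem TMoveI.append {zt zt' zt'' : ZTyp} {δs δs' : List Dir}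
    (h : TMoveI zt δs zt') (h' : TMoveI zt' δs' zt'') : TMoveI zt (δs ++ δs') zt'' := by
  induction h with
  | refl => exact h'
  | cons s _ ih => exact .cons s (ih h')

theorem EMoveI.append {ze ze' ze'' : ZExp} {δs δs' : List Dir}
    (h : EMoveI ze δs ze') (h' : EMoveI ze' δs' ze'') : EMoveI ze (δs ++ δs') ze'' := by
  induction h with
  | refl => exact h'
  | cons s _ ih => exact .cons s (ih h')

theorem TMoveI.zip1 {zt zt' : ZTyp} {δs : List Dir} {τ : HTyp}
    (h : TMoveI zt δs zt') : TMoveI (.arrL zt τ) δs (.arrL zt' τ) := by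
  induction h with
  | refl => exact .refl
  | cons s _ ih => exact .cons (.zip1 s) ih

theorem TMoveI.zip2 {zt zt' : ZTyp} {δs : List Dir} {τ : HTyp}
    (h : TMoveI zt δs zt') : TMoveI (.arrR τ zt) δs (.arrR τ zt') := by
  induction h with
  | refl => exact .refl
  | cons s _ ih => exact .cons (.zip2 s) ih

theorem EMoveI.lamZip {x : String} {ze ze' : ZExp} {δs : List Dir}
    (h : EMoveI ze δs ze') : EMoveI (.lam x ze) δs (.lam x ze') := by
  induction h with
  | refl => exact .refl
  | cons s _ ih => exact .cons (.lamZip s) ih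

theorem EMoveI.apZip1 {ze ze' : ZExp} {δs : List Dir} {e : HExp}
    (h : EMoveI ze δs ze') : EMoveI (.apL ze e) δs (.apL ze' e) := by
  induction h with
  | refl => exact .refl
  | cons s _ ih => exact .cons (.apZip1 s) ih

theorem EMoveI.apZip2 {ze ze' : ZExp} {δs : List Dir} {e : HExp}
    (h : EMoveI ze δs ze') : EMoveI (.apR e ze) δs (.apR e ze') := by
  induction h with
  | refl => exact .refl
  | cons s _ ih => exact .cons (.apZip2 s) ih

theorem EMoveI.plusZip1 {ze ze' : ZExp} {δs : List Dir} {e : HExp}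
    (h : EMoveI ze δs ze') : EMoveI (.plusL ze e) δs (.plusL ze' e) := by
  induction h with
  | refl => exact .refl
  | cons s _ ih => exact .cons (.plusZip1 s) ih

theorem EMoveI.plusZip2 {ze ze' : ZExp} {δs : List Dir} {e : HExp}
    (h : EMoveI ze δs ze') : EMoveI (.plusR e ze) δs (.plusR e ze') := by
  induction h with
  | refl => exact .refl
  | cons s _ ih => exact .cons (.plusZip2 s) ih

theorem EMoveI.ascZip1 {ze ze' : ZExp} {δs : List Dir} {τ : HTyp}
    (h : EMoveI ze δs ze') : EMoveI (.ascL ze τ) δs (.ascL ze' τ) := by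
  induction h with
  | refl => exact .refl
  | cons s _ ih => exact .cons (.ascZip1 s) ih

theorem EMoveI.ascZip2 {zt zt' : ZTyp} {δs : List Dir} {e : HExp}
    (h : TMoveI zt δs zt') : EMoveI (.ascR e zt) δs (.ascR e zt') := by
  induction h with
  | refl => exact .refl
  | cons s _ ih => exact .cons (.ascZip2 s) ih

theorem EMoveI.neholeZip {ze ze' : ZExp} {δs : List Dir}
    (h : EMoveI ze δs ze') : EMoveI (.nehole ze) δs (.nehole ze') := by
  induction h with
  | refl => exact .refl
  | cons s _ ih => exact .cons (.neholeZip s) ih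

/-- Move the cursor up to the root of a Z-type. -/
theorem tUp : ∀ zt : ZTyp, ∃ δs, TMoveI zt δs (.cursor zt.erase) := by
  intro zt
  induction zt with
  | cursor τ => exact ⟨[], .refl⟩
  | arrL zt τ ih =>
      obtain ⟨δs, h⟩ := ih
      exact ⟨δs ++ [.parent], (TMoveI.zip1 h).append (.cons .arrParent1 .refl)⟩
  | arrR τ zt ih =>
      obtain ⟨δs, h⟩ := ih
      exact ⟨δs ++ [.parent], (TMoveI.zip2 h).append (.cons .arrParent2 .refl)⟩

/-- Move the cursor down from the root of a Z-type. -/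
theorem tDown : ∀ zt : ZTyp, ∃ δs, TMoveI (.cursor zt.erase) δs zt := by
  intro zt
  induction zt with
  | cursor τ => exact ⟨[], .refl⟩
  | arrL zt τ ih =>
      obtain ⟨δs, h⟩ := ih
      exact ⟨.child 1 :: δs, .cons .arrChild1 (TMoveI.zip1 h)⟩
  | arrR τ zt ih =>
      obtain ⟨δs, h⟩ := ih
      exact ⟨.child 2 :: δs, .cons .arrChild2 (TMoveI.zip2 h)⟩

/-- Move the cursor up to the root of a Z-expression. -/
theorem eUp : ∀ ze : ZExp, ∃ δs, EMoveI ze δs (.cursor ze.erase) := by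
  intro ze
  induction ze with
  | cursor e => exact ⟨[], .refl⟩
  | lam x ze ih =>
      obtain ⟨δs, h⟩ := ih
      exact ⟨δs ++ [.parent], (EMoveI.lamZip h).append (.cons .lamParent .refl)⟩
  | apL ze e ih =>
      obtain ⟨δs, h⟩ := ih
      exact ⟨δs ++ [.parent], (EMoveI.apZip1 h).append (.cons .apParent1 .refl)⟩
  | apR e ze ih =>
      obtain ⟨δs, h⟩ := ih
      exact ⟨δs ++ [.parent], (EMoveI.apZip2 h).append (.cons .apParent2 .refl)⟩
  | plusL ze e ih =>
      obtain ⟨δs, h⟩ := ih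
      exact ⟨δs ++ [.parent], (EMoveI.plusZip1 h).append (.cons .plusParent1 .refl)⟩
  | plusR e ze ih =>
      obtain ⟨δs, h⟩ := ih
      exact ⟨δs ++ [.parent], (EMoveI.plusZip2 h).append (.cons .plusParent2 .refl)⟩
  | ascL ze τ ih =>
      obtain ⟨δs, h⟩ := ih
      exact ⟨δs ++ [.parent], (EMoveI.ascZip1 h).append (.cons .ascParent1 .refl)⟩
  | ascR e zt =>
      obtain ⟨δs, h⟩ := tUp zt
      exact ⟨δs ++ [.parent], (EMoveI.ascZip2 h).append (.cons .ascParent2 .refl)⟩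
  | nehole ze ih =>
      obtain ⟨δs, h⟩ := ih
      exact ⟨δs ++ [.parent], (EMoveI.neholeZip h).append (.cons .neholeParent .refl)⟩

/-- Move the cursor down from the root of a Z-expression. -/
theorem eDown : ∀ ze : ZExp, ∃ δs, EMoveI (.cursor ze.erase) δs ze := by
  intro ze
  induction ze with
  | cursor e => exact ⟨[], .refl⟩
  | lam x ze ih =>
      obtain ⟨δs, h⟩ := ih
      exact ⟨.child 1 :: δs, .cons .lamChild1 (EMoveI.lamZip h)⟩
  | apL ze e ih =>
      obtain ⟨δs, h⟩ := ih
      exact ⟨.child 1 :: δs, .cons .apChild1 (EMoveI.apZip1 h)⟩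
  | apR e ze ih =>
      obtain ⟨δs, h⟩ := ih
      exact ⟨.child 2 :: δs, .cons .apChild2 (EMoveI.apZip2 h)⟩
  | plusL ze e ih =>
      obtain ⟨δs, h⟩ := ih
      exact ⟨.child 1 :: δs, .cons .plusChild1 (EMoveI.plusZip1 h)⟩
  | plusR e ze ih =>
      obtain ⟨δs, h⟩ := ih
      exact ⟨.child 2 :: δs, .cons .plusChild2 (EMoveI.plusZip2 h)⟩
  | ascL ze τ ih =>
      obtain ⟨δs, h⟩ := ih
      exact ⟨.child 1 :: δs, .cons .ascChild1 (EMoveI.ascZip1 h)⟩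
  | ascR e zt =>
      obtain ⟨δs, h⟩ := tDown zt
      exact ⟨.child 2 :: δs, .cons .ascChild2 (EMoveI.ascZip2 h)⟩
  | nehole ze ih =>
      obtain ⟨δs, h⟩ := ih
      exact ⟨.child 1 :: δs, .cons .neholeChild1 (EMoveI.neholeZip h)⟩

/-- Lift iterated movements to the iterated synthetic action judgement. -/
theorem synOfMoves {Γ : Ctx} {ze ze' : ZExp} {τ : HTyp} {δs : List Dir}
    (h : EMoveI ze δs ze') :
    Movements (δs.map HAction.move) ∧ SynActI Γ ze τ (δs.map HAction.move) ze' τ := by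
  induction h with
  | refl => exact ⟨.nil, .refl⟩
  | cons s _ ih => exact ⟨.cons ih.1, .cons (.move s) ih.2⟩

/-- Reachability (synthetic clause). -/
theorem reachability_syn {Γ : Ctx} {ze ze' : ZExp} {τ : HTyp}
    (hsyn : Syn Γ ze.erase τ) (h : ze.erase = ze'.erase) :
    ∃ αs : List HAction, Movements αs ∧ SynActI Γ ze τ αs ze' τ := by
  obtain ⟨δs₁, h₁⟩ := eUp ze
  obtain ⟨δs₂, h₂⟩ := eDown ze'
  rw [← h] at h₂
  have := synOfMoves (Γ := Γ) (τ := τ) (h₁.append h₂)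
  exact ⟨_, this.1, this.2⟩
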